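/- Let 0 < p < 1/2 and q = 1 − p. Let R_k(z) be the polynomials defined by R_{−1}(z) = 1, R_0(z) = 1 − q z, and R_k(z) = R_{k−1}(z) − p q z² R_{k−2}(z) for k ≥ 1. Let z be real with 0 < z < 1/(2√(pq)), and set t = √(1 − 4 p q z²) ∈ (0,1); assume 1 + t − √(q/p)·√(1 − t²) ≠ 0. Then for every k ≥ 0, R_k(z) = 0 if and only if ((1+t)/(1−t))^{k+1} = (1 − t − √(q/p)·√(1 − t²)) / (1 + t − √(q/p)·√(1 − t²)). -/
import Mathlib


/-- Index-shifted denominator polynomials for the weak scenario: `Rwrec p z (k+1)`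
is the quantity `R_k(z)` of the paper, so `R_{-1}(z) = 1`, `R_0(z) = 1 - (1-p) z`,
and `R_k(z) = R_{k-1}(z) - p (1-p) z² R_{k-2}(z)` for `k ≥ 1`. -/
noncomputable def Rwrec (p z : ℝ) : ℕ → ℝ
  | 0 => 1
  | 1 => 1 - (1 - p) * z
  | (k + 2) => Rwrec p z (k + 1) - p * (1 - p) * z ^ 2 * Rwrec p z k

/-- With `t = √(1 - 4 p q z²)` and `1 + t - √(q/p)√(1-t²) ≠ 0`, for every `k ≥ 0`:
`R_k(z) = 0` iff
`((1+t)/(1-t))^{k+1} = (1 - t - √(q/p)√(1-t²)) / (1 + t - √(q/p)√(1-t²))`. -/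
theorem weak_R_zero_iff (p q : ℝ) (hp0 : 0 < p) (hp : p < 1 / 2) (hq : q = 1 - p)
    (z : ℝ) (hz0 : 0 < z) (hz1 : z < 1 / (2 * Real.sqrt (p * q)))
    (t : ℝ) (ht : t = Real.sqrt (1 - 4 * p * q * z ^ 2))
    (ht' : 1 + t - Real.sqrt (q / p) * Real.sqrt (1 - t ^ 2) ≠ 0) :
    ∀ k : ℕ,
      Rwrec p z (k + 1) = 0 ↔
        ((1 + t) / (1 - t)) ^ (k + 1) =
          (1 - t - Real.sqrt (q / p) * Real.sqrt (1 - t ^ 2)) /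
            (1 + t - Real.sqrt (q / p) * Real.sqrt (1 - t ^ 2)) := by
  have hq0 : 0 < q := by rw [hq]; linarith
  have hpq : 0 < p * q := mul_pos hp0 hq0
  have hs0 : 0 < Real.sqrt (p * q) := Real.sqrt_pos.mpr hpq
  have hz2 : z * (2 * Real.sqrt (p * q)) < 1 :=
    (lt_div_iff₀ (by positivity)).mp hz1
  have hsq : Real.sqrt (p * q) ^ 2 = p * q := Real.sq_sqrt hpq.le
  have hlt : 4 * p * q * z ^ 2 < 1 := by
    nlinarith [hz2, hsq, mul_pos hz0 hs0]
  have hpos : 0 < 1 - 4 * p * q * z ^ 2 := by linarith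
  have ht0 : 0 < t := by rw [ht]; exact Real.sqrt_pos.mpr hpos
  have ht2 : t ^ 2 = 1 - 4 * p * q * z ^ 2 := by rw [ht]; exact Real.sq_sqrt hpos.le
  have ht1 : t < 1 := by
    nlinarith [ht2, ht0, mul_pos hpq (pow_pos hz0 2)]
  -- √(q/p) √(1-t²) = 2 q z
  have hs : Real.sqrt (q / p) * Real.sqrt (1 - t ^ 2) = 2 * q * z := by
    rw [← Real.sqrt_mul (by positivity)]
    have : q / p * (1 - t ^ 2) = (2 * q * z) ^ 2 := by
      rw [ht2]; field_simp; ring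
    rw [this, Real.sqrt_sq (by positivity)]
  rw [hs] at ht' ⊢
  have h1t : (0:ℝ) < 1 - t := by linarith
  -- division-free closed form
  have key : ∀ n : ℕ, Rwrec p z n * (2 * t) * 2 ^ n =
      (1 + t - 2 * q * z) * (1 + t) ^ n + (t - 1 + 2 * q * z) * (1 - t) ^ n := by
    intro n
    induction n using Nat.twoStepInduction with
    | zero =>
      show (1:ℝ) * (2 * t) * 2 ^ 0 = _
      ring
    | one =>
      show (1 - (1 - p) * z) * (2 * t) * 2 ^ 1 = _
      rw [← hq]; ring
    | more n ih1 ih2 =>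
      show (Rwrec p z (n+1) - p * (1-p) * z ^ 2 * Rwrec p z n) * (2 * t) * 2 ^ (n+2) = _
      have hc : (1 + t) ^ 2 = 2 * (1 + t) - 4 * p * q * z ^ 2 := by
        linear_combination ht2
      have hd : (1 - t) ^ 2 = 2 * (1 - t) - 4 * p * q * z ^ 2 := by
        linear_combination ht2
      rw [← hq]
      linear_combination 2 * ih2 - 4 * p * q * z ^ 2 * ih1
        - ((1 + t - 2*q*z) * (1+t)^n) * hc - ((t - 1 + 2*q*z) * (1-t)^n) * hd
  intro k
  have hK := key (k + 1)
  have hbne : ((1 - t) ^ (k+1) : ℝ) ≠ 0 := by positivity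
  constructor
  · intro h
    rw [div_pow, div_eq_div_iff hbne ht']
    linear_combination (2 * t * 2 ^ (k+1)) * h - hK
  · intro h
    rw [div_pow, div_eq_div_iff hbne ht'] at h
    have h3 : Rwrec p z (k+1) * ((2 * t) * 2 ^ (k+1)) = 0 := by
      rw [← mul_assoc, hK]; linear_combination h
    exact (mul_eq_zero.mp h3).resolve_right (by positivity)
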